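/- Under the LARCH assumptions, the Volterra series σ_t = a + a·∑_{k=1}^∞ ∑_{j₁,...,j_k ≥ 1} b_{j₁}⋯b_{j_k} ε_{t-j₁} ⋯ ε_{t-j₁-⋯-j_k} converges in L²(Ω), and E(σ_t²) = a²·(1 + ∑_{k=1}^∞ b^k) = a²/(1-b) where b = ∑ b_j². -/

import Mathlib

/-!
The monomials `∏_{s ∈ S} ε_s`, `S ⊆ ℤ` finite, form an orthonormal family in `L²`: by independence
the expectation of a product of two of them factorises, and a variable occurring only once
contributes its mean `0`. Distinct index tuples `(j₁, …, j_k)` give distinct time sets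
`{t - j₁, t - j₁ - j₂, …}`, so the truncation `T N` is a finite orthogonal expansion with squared
norm `a² ∑_{k ≤ N} (∑_{j < N} b_j²)^k`. Being increasing partial sums of an orthogonal series, the
`T N` form a Cauchy sequence as soon as these squared norms converge, here to `a² / (1 - b)`; this
is also the squared norm of the limit.
-/

open MeasureTheory ProbabilityTheory Finset Filter Topology

lemma eq_of_forall_sum_Iic_eq {β M : Type*} [LinearOrder β] [LocallyFiniteOrderBot β]
    [WellFoundedLT β] [AddCommGroup M] {q q' : β → M}
    (h : ∀ l, ∑ i ∈ Iic l, q i = ∑ i ∈ Iic l, q' i) : q = q' := by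
  classical
  funext l
  induction l using WellFoundedLT.induction with
  | _ l ih =>
    have hl := h l
    rw [← Finset.Iio_insert, Finset.sum_insert Finset.notMem_Iio_self,
      Finset.sum_insert Finset.notMem_Iio_self,
      Finset.sum_congr rfl fun i hi => ih i (Finset.mem_Iio.1 hi)] at hl
    exact add_right_cancel hl

lemma tendsto_sum_range_succ_pow {B : ℕ → ℝ} {b : ℝ} (hB : Tendsto B atTop (𝓝 b))
    (hb : |b| < 1) : Tendsto (fun N => ∑ k ∈ range (N + 1), B N ^ k) atTop (𝓝 (1 - b)⁻¹) := by
  obtain ⟨r, hbr, hr1⟩ := exists_between hb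
  have hsmall : ∀ᶠ N in atTop, |B N| < r := hB.abs.eventually (gt_mem_nhds hbr)
  have hpow : Tendsto (fun N => B N ^ (N + 1)) atTop (𝓝 0) := by
    refine squeeze_zero_norm' ?_ ((tendsto_pow_atTop_nhds_zero_of_lt_one
      ((abs_nonneg b).trans hbr.le) hr1).comp (tendsto_add_atTop_nat 1))
    filter_upwards [hsmall] with N hN
    rw [norm_pow, Real.norm_eq_abs]
    exact pow_le_pow_left₀ (abs_nonneg _) hN.le _
  have hlim : Tendsto (fun N => (B N ^ (N + 1) - 1) / (B N - 1)) atTop (𝓝 (1 - b)⁻¹) := by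
    have hb1 : b - 1 ≠ 0 := by linarith [le_abs_self b]
    have hval : (1 - b)⁻¹ = (0 - 1) / (b - 1) := by
      rw [zero_sub, neg_div, ← div_neg, neg_sub, one_div]
    rw [hval]
    exact (hpow.sub_const 1).div (hB.sub_const 1) hb1
  refine hlim.congr' ?_
  filter_upwards [hsmall] with N hN
  rw [geom_sum_eq (fun h => by rw [h, abs_one] at hN; linarith)]

lemma Finset.prod_mul_prod_eq_prod_union_ite {ι M : Type*} [CommMonoid M] [DecidableEq ι]
    (x : ι → M) (S S' : Finset ι) :
    (∏ i ∈ S, x i) * ∏ i ∈ S', x i =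
      ∏ i ∈ S ∪ S', (if i ∈ S then x i else 1) * (if i ∈ S' then x i else 1) := by
  rw [Finset.prod_mul_distrib, Finset.prod_ite_mem, Finset.prod_ite_mem,
    Finset.union_inter_cancel_left, Finset.union_inter_cancel_right]

lemma Finset.sum_piFinset_range_eq_sum_fin {M : Type*} [AddCommMonoid M] (k N : ℕ)
    (G : (Fin k → ℕ) → M) :
    ∑ p ∈ Fintype.piFinset (fun _ : Fin k => range N), G p =
      ∑ j : Fin k → Fin N, G fun i => j i :=
  Finset.sum_bij' (fun p hp i => ⟨p i, Finset.mem_range.1 (Fintype.mem_piFinset.1 hp i)⟩)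
    (fun j _ i => j i) (fun _ _ => Finset.mem_univ _)
    (fun j _ => Fintype.mem_piFinset.2 fun i => Finset.mem_range.2 (j i).isLt)
    (fun _ _ => rfl) (fun _ _ => rfl) (fun _ _ => rfl)

lemma Orthonormal.exists_tendsto_sum_smul {E κ : Type*} [NormedAddCommGroup E]
    [InnerProductSpace ℝ E] [CompleteSpace E] {v : κ → E} (hv : Orthonormal ℝ v) (c : κ → ℝ)
    {I : ℕ → Finset κ} (hI : Monotone I) {L : ℝ}
    (hL : Tendsto (fun N => ∑ x ∈ I N, c x ^ 2) atTop (𝓝 L)) :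
    ∃ g : E, Tendsto (fun N => ∑ x ∈ I N, c x • v x) atTop (𝓝 g) ∧ ‖g‖ ^ 2 = L := by
  classical
  have hnorm : ∀ s : Finset κ, ‖∑ x ∈ s, c x • v x‖ ^ 2 = ∑ x ∈ s, c x ^ 2 := fun s => by
    rw [← real_inner_self_eq_norm_sq, hv.inner_sum]
    simp [sq]
  have hdist : ∀ N M, N ≤ M → dist (∑ x ∈ I M, c x • v x) (∑ x ∈ I N, c x • v x) ^ 2 =
      ∑ x ∈ I M, c x ^ 2 - ∑ x ∈ I N, c x ^ 2 := fun N M h => by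
    rw [dist_eq_norm, ← Finset.sum_sdiff_eq_sub (hI h), hnorm, Finset.sum_sdiff_eq_sub (hI h)]
  have hcauchy : CauchySeq fun N => ∑ x ∈ I N, c x • v x := by
    rw [Metric.cauchySeq_iff']
    intro δ hδ
    obtain ⟨N, hN⟩ := Metric.cauchySeq_iff'.1 hL.cauchySeq (δ ^ 2) (by positivity)
    refine ⟨N, fun M hM => lt_of_pow_lt_pow_left₀ 2 hδ.le ?_⟩
    rw [hdist N M hM]
    exact (le_abs_self _).trans_lt (hN M hM)
  obtain ⟨g, hg⟩ := cauchySeq_tendsto_of_complete hcauchy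
  refine ⟨g, hg, tendsto_nhds_unique (hg.norm.pow 2) ?_⟩
  simpa only [hnorm] using hL

namespace MeasureTheory

variable {α : Type*} [MeasurableSpace α] {μ : Measure α}

lemma Lp.coeFn_finset_sum {E κ : Type*} [NormedAddCommGroup E] {p : ENNReal} (s : Finset κ)
    (F : κ → Lp E p μ) : ⇑(∑ x ∈ s, F x) =ᵐ[μ] fun a => ∑ x ∈ s, F x a := by
  classical
  induction s using Finset.induction with
  | empty =>
    simp only [Finset.sum_empty]
    exact Lp.coeFn_zero E p μ
  | insert x s hx ih =>
    filter_upwards [Lp.coeFn_add (F x) (∑ y ∈ s, F y), ih] with a h1 h2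
    rw [Finset.sum_insert hx, h1, Pi.add_apply, h2, Finset.sum_insert hx]

lemma L2.real_inner_toLp_toLp {f g : α → ℝ} (hf : MemLp f 2 μ) (hg : MemLp g 2 μ) :
    inner ℝ (hf.toLp f) (hg.toLp g) = ∫ a, f a * g a ∂μ := by
  rw [L2.inner_def]
  refine integral_congr_ae ?_
  filter_upwards [hf.coeFn_toLp, hg.coeFn_toLp] with a h1 h2
  simp [h1, h2, mul_comm]

lemma L2.integral_sq_eq_norm_sq (f : Lp ℝ 2 μ) : ∫ a, f a ^ 2 ∂μ = ‖f‖ ^ 2 := by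
  rw [← real_inner_self_eq_norm_sq, L2.inner_def]
  simp [sq]

end MeasureTheory

namespace ProbabilityTheory

variable {Ω ι : Type*} [MeasurableSpace Ω] {μ : Measure Ω}

lemma iIndepFun.integrable_finset_prod {g : ι → Ω → ℝ} (hg : iIndepFun g μ)
    (hint : ∀ i, Integrable (g i) μ) (s : Finset ι) :
    Integrable (fun ω => ∏ i ∈ s, g i ω) μ := by
  classical
  have := hg.isProbabilityMeasure
  induction s using Finset.induction with
  | empty => simp
  | insert i s hi ih =>
    simp_rw [Finset.prod_insert hi, mul_comm (g i _)]
    rw [← Finset.prod_fn] at ih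
    have := (hg.indepFun_finsetProd_of_notMem₀ (fun j => (hint j).aemeasurable) hi).integrable_mul
      ih (hint i)
    simpa only [Pi.mul_def, Finset.prod_apply] using this

lemma iIndepFun.integral_finset_prod {g : ι → Ω → ℝ} (hg : iIndepFun g μ)
    (hint : ∀ i, Integrable (g i) μ) (s : Finset ι) :
    ∫ ω, ∏ i ∈ s, g i ω ∂μ = ∏ i ∈ s, ∫ ω, g i ω ∂μ := by
  classical
  induction s using Finset.induction with
  | empty => simp [hg.isProbabilityMeasure]
  | insert i s hi ih =>
    simp_rw [Finset.prod_insert hi, mul_comm (g i _), mul_comm (∫ ω, g i ω ∂μ), ← ih]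
    have := (hg.indepFun_finsetProd_of_notMem₀ (fun j => (hint j).aemeasurable) hi)
      |>.integral_fun_mul_eq_mul_integral
        (by rw [Finset.prod_fn]; exact (hg.integrable_finset_prod hint s).1)
        (hint i).1
    simpa only [Finset.prod_apply] using this

variable {ε : ι → Ω → ℝ}

lemma integral_prod_mul_prod [DecidableEq ι] (hindep : iIndepFun ε μ)
    (hL2 : ∀ i, MemLp (ε i) 2 μ) (hmean : ∀ i, μ[ε i] = 0)
    (hvar : ∀ i, μ[fun ω => ε i ω ^ 2] = 1) (S S' : Finset ι) :
    ∫ ω, (∏ i ∈ S, ε i ω) * ∏ i ∈ S', ε i ω ∂μ = if S = S' then 1 else 0 := by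
  have := hindep.isProbabilityMeasure
  set φ : ι → ℝ → ℝ := fun i x => (if i ∈ S then x else 1) * (if i ∈ S' then x else 1)
  have hφ : ∀ i, Measurable (φ i) := fun i => by dsimp only [φ]; split_ifs <;> fun_prop
  have hfactor : ∀ i, Integrable (φ i ∘ ε i) μ ∧
      ∫ ω, φ i (ε i ω) ∂μ = if (i ∈ S ↔ i ∈ S') then 1 else 0 := by
    intro i
    have h1 : Integrable (ε i) μ := (hL2 i).integrable one_le_two
    have h2 : Integrable (fun ω => ε i ω * ε i ω) μ := by
      simpa only [sq] using (hL2 i).integrable_sq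
    have h2' : ∫ ω, ε i ω * ε i ω ∂μ = 1 := by simpa only [sq] using hvar i
    by_cases hS : i ∈ S <;> by_cases hS' : i ∈ S' <;>
      simp [φ, Function.comp_def, hS, hS', h1, h2, h2', hmean i]
  have hprod : ∀ ω, (∏ i ∈ S, ε i ω) * ∏ i ∈ S', ε i ω = ∏ i ∈ S ∪ S', (φ i ∘ ε i) ω :=
    fun ω => Finset.prod_mul_prod_eq_prod_union_ite (ε · ω) S S'
  have hindep' : iIndepFun (fun i => φ i ∘ ε i) μ := hindep.comp φ hφ
  simp_rw [hprod]
  rw [hindep'.integral_finset_prod (fun i => (hfactor i).1)]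
  have hsame : (∀ i ∈ S ∪ S', (i ∈ S ↔ i ∈ S')) ↔ S = S' := by
    simp only [Finset.mem_union, Finset.ext_iff]
    grind
  simp only [Function.comp_apply, (hfactor _).2, Finset.prod_boole, hsame]

lemma iIndepFun.memLp_two_finset_prod (hindep : iIndepFun ε μ) (hL2 : ∀ i, MemLp (ε i) 2 μ)
    (S : Finset ι) : MemLp (fun ω => ∏ i ∈ S, ε i ω) 2 μ := by
  rw [memLp_two_iff_integrable_sq
    (Finset.aestronglyMeasurable_fun_prod S fun i _ => (hL2 i).aestronglyMeasurable)]
  simp_rw [← Finset.prod_pow]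
  exact (hindep.comp (fun _ x => x ^ 2) fun _ => by fun_prop).integrable_finset_prod
    (fun i => (hL2 i).integrable_sq) S

variable (hindep : iIndepFun ε μ) (hL2 : ∀ i, MemLp (ε i) 2 μ) (hmean : ∀ i, μ[ε i] = 0)
  (hvar : ∀ i, μ[fun ω => ε i ω ^ 2] = 1)
include hindep hL2 hmean hvar

lemma orthonormal_toLp_finset_prod {κ : Type*} {S : κ → Finset ι} (hS : S.Injective) :
    Orthonormal ℝ fun x => (hindep.memLp_two_finset_prod hL2 (S x)).toLp _ := by
  classical
  rw [orthonormal_iff_ite]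
  intro x y
  rw [L2.real_inner_toLp_toLp, integral_prod_mul_prod hindep hL2 hmean hvar]
  simp only [hS.eq_iff]

theorem exists_memLp_tendsto_sum_mul_finset_prod {κ : Type*} {S : κ → Finset ι}
    (hS : S.Injective) (c : κ → ℝ) {I : ℕ → Finset κ} (hI : Monotone I) {L : ℝ}
    (hL : Tendsto (fun N => ∑ x ∈ I N, c x ^ 2) atTop (𝓝 L)) :
    ∃ σ : Ω → ℝ, MemLp σ 2 μ ∧
      Tendsto (fun N => eLpNorm (fun ω => ∑ x ∈ I N, c x * ∏ i ∈ S x, ε i ω - σ ω) 2 μ)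
        atTop (𝓝 0) ∧
      μ[fun ω => σ ω ^ 2] = L := by
  obtain ⟨g, hg, hgL⟩ :=
    (orthonormal_toLp_finset_prod hindep hL2 hmean hvar hS).exists_tendsto_sum_smul c hI hL
  refine ⟨g, Lp.memLp g, ?_, by rw [L2.integral_sq_eq_norm_sq, hgL]⟩
  refine ((Lp.tendsto_Lp_iff_tendsto_eLpNorm' _ _).1 hg).congr fun N =>
    eLpNorm_congr_ae (EventuallyEq.sub ?_ EventuallyEq.rfl)
  have hX := hindep.memLp_two_finset_prod hL2
  have hterm : ∀ x, ⇑(c x • (hX (S x)).toLp _) =ᵐ[μ] fun ω => c x * ∏ i ∈ S x, ε i ω :=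
    fun x => by
      filter_upwards [Lp.coeFn_smul (c x) ((hX (S x)).toLp _), (hX (S x)).coeFn_toLp]
        with ω h1 h2
      rw [h1, Pi.smul_apply, h2, smul_eq_mul]
  filter_upwards [Lp.coeFn_finset_sum (I N) fun x => c x • (hX (S x)).toLp _,
    (eventually_all_finset (I N)).2 fun x _ => hterm x]
    with ω h1 h2
  rw [h1]
  exact Finset.sum_congr rfl h2

end ProbabilityTheory

/-- `volterraLags p l = j₁ + ⋯ + j_{l+1}`, where the lags are `jᵢ = p (i - 1) + 1 ≥ 1`. -/
def volterraLags {k : ℕ} (p : Fin k → ℕ) (l : Fin k) : ℤ :=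
  ∑ i ∈ univ.filter (· ≤ l), ((p i : ℤ) + 1)

lemma volterraLags_strictMono {k : ℕ} (p : Fin k → ℕ) : StrictMono (volterraLags p) := by
  intro l l' hll
  refine Finset.sum_lt_sum_of_subset (i := l') ?_ (by simp) (by simp [hll.not_ge])
    (by positivity) fun _ _ _ => by positivity
  intro i hi
  simp only [Finset.mem_filter, Finset.mem_univ, true_and] at hi ⊢
  exact hi.trans hll.le

lemma volterraLags_injective (k : ℕ) : (volterraLags (k := k)).Injective := by
  intro p p' h
  have hq := eq_of_forall_sum_Iic_eq (q := fun i => (p i : ℤ) + 1) (q' := fun i => (p' i : ℤ) + 1)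
    fun l => by simpa only [volterraLags, Finset.filter_ge_eq_Iic] using congrFun h l
  funext i
  simpa using congrFun hq i

/-- The monomial `ε_{t-j₁} ⋯ ε_{t-j₁-⋯-j_k}` of the paper is the product over this set. -/
def volterraTimes (t : ℤ) (x : Σ k, Fin k → ℕ) : Finset ℤ :=
  univ.image fun l => t - volterraLags x.2 l

lemma volterraTimes_strictAnti (t : ℤ) {k : ℕ} (p : Fin k → ℕ) :
    StrictAnti fun l => t - volterraLags p l :=
  fun _ _ h => sub_lt_sub_left (volterraLags_strictMono p h) t

lemma card_volterraTimes (t : ℤ) (x : Σ k, Fin k → ℕ) : (volterraTimes t x).card = x.1 := by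
  rw [volterraTimes, Finset.card_image_of_injective _ (volterraTimes_strictAnti t x.2).injective,
    Finset.card_univ, Fintype.card_fin]

lemma volterraTimes_injective (t : ℤ) : (volterraTimes t).Injective := by
  rintro ⟨k, p⟩ ⟨k', p'⟩ h
  obtain rfl : k = k' := by simpa only [card_volterraTimes] using congrArg Finset.card h
  have hrange := congrArg (fun s : Finset ℤ => (s : Set ℤ)) h
  simp only [volterraTimes, Finset.coe_image, Finset.coe_univ, Set.image_univ] at hrange
  have := ((volterraTimes_strictAnti t p).range_inj (volterraTimes_strictAnti t p')).1 hrange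
  obtain rfl : p = p' := volterraLags_injective k (funext fun l => by simpa using congrFun this l)
  rfl

/-- The monomials of `T N`: degree `k ≤ N` and lags `jᵢ ≤ N`; the empty monomial (`k = 0`)
accounts for the constant term `a`. -/
def volterraIndex (N : ℕ) : Finset (Σ k, Fin k → ℕ) :=
  (range (N + 1)).sigma fun _ => Fintype.piFinset fun _ => range N

lemma volterraIndex_mono : Monotone volterraIndex := fun _ _ h =>
  Finset.sigma_mono (Finset.range_mono (by omega)) fun _ =>
    Fintype.piFinset_subset _ _ fun _ => Finset.range_mono h

lemma sum_volterraIndex_prod_sq (bj : ℕ → ℝ) (N : ℕ) :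
    ∑ x ∈ volterraIndex N, (∏ i, bj (x.2 i)) ^ 2 =
      ∑ k ∈ range (N + 1), (∑ j ∈ range N, bj j ^ 2) ^ k := by
  rw [volterraIndex, Finset.sum_sigma]
  refine Finset.sum_congr rfl fun k _ => ?_
  simp_rw [← Finset.prod_pow]
  rw [Finset.sum_pow']

lemma prod_volterraTimes (e : ℤ → ℝ) (t : ℤ) {k : ℕ} (p : Fin k → ℕ) :
    ∏ s ∈ volterraTimes t ⟨k, p⟩, e s = ∏ l, e (t - volterraLags p l) :=
  Finset.prod_image fun _ _ _ _ h => (volterraTimes_strictAnti t p).injective h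

lemma volterra_sum_eq_sum_volterraIndex (e : ℤ → ℝ) (a : ℝ) (bj : ℕ → ℝ) (t : ℤ) (N : ℕ) :
    a + a * ∑ k ∈ Finset.Icc 1 N, ∑ j : Fin k → Fin N,
        (∏ i, bj (j i)) *
          ∏ l : Fin k, e (t - ∑ i ∈ Finset.univ.filter (fun i : Fin k => i ≤ l),
            ((j i : ℕ) + 1 : ℤ)) =
      ∑ x ∈ volterraIndex N, a * (∏ i, bj (x.2 i)) * ∏ s ∈ volterraTimes t x, e s := by
  simp only [volterraIndex, Finset.sum_sigma, prod_volterraTimes, mul_assoc, ← Finset.mul_sum,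
    Finset.sum_piFinset_range_eq_sum_fin]
  rw [Finset.range_eq_Ico, Finset.Ico_add_one_right_eq_Icc,
    ← Finset.insert_Icc_add_one_left_eq_Icc (Nat.zero_le N), Finset.sum_insert (by simp)]
  simp [volterraLags, mul_add]

theorem volterra_L2_convergence_general
    {Ω : Type*} [MeasurableSpace Ω] (μ : Measure Ω)
    (ε : ℤ → Ω → ℝ)
    (hindep : iIndepFun ε μ)
    (hL2 : ∀ i, MemLp (ε i) 2 μ)
    (hmean : ∀ i, μ[ε i] = 0)
    (hvar : ∀ i, μ[fun ω => (ε i ω) ^ 2] = 1)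
    (a : ℝ)
    (bj : ℕ → ℝ) (hsum : Summable (fun j => (bj j) ^ 2))
    (b : ℝ) (hb : b = ∑' j : ℕ, (bj j) ^ 2) (hb1 : b < 1)
    (t : ℤ)
    (T : ℕ → Ω → ℝ)
    (hT : ∀ N : ℕ, ∀ ω : Ω, T N ω =
      a + a * ∑ k ∈ Finset.Icc 1 N, ∑ j : Fin k → Fin N,
        (∏ i, bj (j i)) *
          ∏ l : Fin k, ε (t - ∑ i ∈ Finset.univ.filter (fun i : Fin k => i ≤ l),
            ((j i : ℕ) + 1 : ℤ)) ω) :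
    ∃ σt : Ω → ℝ, MemLp σt 2 μ ∧
      Filter.Tendsto (fun N => eLpNorm (fun ω => T N ω - σt ω) 2 μ)
        Filter.atTop (nhds 0) ∧
      μ[fun ω => (σt ω) ^ 2] = a ^ 2 / (1 - b) := by
  have hb0 : 0 ≤ b := hb ▸ tsum_nonneg fun j => sq_nonneg (bj j)
  have hB : Tendsto (fun N => ∑ j ∈ range N, bj j ^ 2) atTop (𝓝 b) :=
    hb ▸ hsum.hasSum.tendsto_sum_nat
  have hL : Tendsto (fun N => ∑ x ∈ volterraIndex N, (a * ∏ i, bj (x.2 i)) ^ 2) atTop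
      (𝓝 (a ^ 2 / (1 - b))) := by
    simp_rw [mul_pow, ← Finset.mul_sum, sum_volterraIndex_prod_sq, div_eq_mul_inv]
    exact (tendsto_sum_range_succ_pow hB (by rwa [abs_of_nonneg hb0])).const_mul _
  obtain ⟨σ, hσ, hconv, hmoment⟩ := exists_memLp_tendsto_sum_mul_finset_prod hindep hL2 hmean
    hvar (volterraTimes_injective t) _ volterraIndex_mono hL
  have hT' : ∀ N ω, T N ω =
      ∑ x ∈ volterraIndex N, a * (∏ i, bj (x.2 i)) * ∏ s ∈ volterraTimes t x, ε s ω :=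
    fun N ω => (hT N ω).trans (volterra_sum_eq_sum_volterraIndex (ε · ω) a bj t N)
  exact ⟨σ, hσ, by simpa only [hT'] using hconv, hmoment⟩

/-- Under the LARCH assumptions (i.i.d. noise with mean 0 and variance 1, `a ≠ 0`,
`b = ∑ b_j² < 1`), the Volterra series
`σ_t = a + a ∑_{k≥1} ∑_{j₁,…,j_k ≥ 1} b_{j₁}⋯b_{j_k} ε_{t-j₁}⋯ε_{t-j₁-⋯-j_k}`
converges in `L²(Ω)` (as the limit of its truncations), and `E(σ_t²) = a²/(1-b)`.
Here `bj j` denotes `b_{j+1}`; the truncation `T N` sums over `k ≤ N` and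
`j₁,…,j_k ≤ N`. -/
theorem volterra_L2_convergence
    {Ω : Type*} [MeasurableSpace Ω] (μ : Measure Ω) [IsProbabilityMeasure μ]
    (ε : ℤ → Ω → ℝ)
    (hmeas : ∀ i, Measurable (ε i))
    (hindep : iIndepFun ε μ)
    (hident : ∀ i j : ℤ, Measure.map (ε i) μ = Measure.map (ε j) μ)
    (hL2 : ∀ i, MemLp (ε i) 2 μ)
    (hmean : ∀ i, μ[ε i] = 0)
    (hvar : ∀ i, μ[fun ω => (ε i ω) ^ 2] = 1)
    (a : ℝ) (ha : a ≠ 0)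
    (bj : ℕ → ℝ) (hsum : Summable (fun j => (bj j) ^ 2))
    (b : ℝ) (hb : b = ∑' j : ℕ, (bj j) ^ 2) (hb1 : b < 1)
    (t : ℤ)
    (T : ℕ → Ω → ℝ)
    (hT : ∀ N : ℕ, ∀ ω : Ω, T N ω =
      a + a * ∑ k ∈ Finset.Icc 1 N, ∑ j : Fin k → Fin N,
        (∏ i, bj (j i)) *
          ∏ l : Fin k, ε (t - ∑ i ∈ Finset.univ.filter (fun i : Fin k => i ≤ l),
            ((j i : ℕ) + 1 : ℤ)) ω) :
    ∃ σt : Ω → ℝ, MemLp σt 2 μ ∧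
      Filter.Tendsto (fun N => eLpNorm (fun ω => T N ω - σt ω) 2 μ)
        Filter.atTop (nhds 0) ∧
      μ[fun ω => (σt ω) ^ 2] = a ^ 2 / (1 - b) :=
  volterra_L2_convergence_general μ ε hindep hL2 hmean hvar a bj hsum b hb hb1 t T hT
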